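/- arXiv:2307.12260 — 4 statements merged into one kernel-verified Lean document; each statement's English description precedes it below -/
import Mathlib

section
/- Let ω : [0,∞) → ℝ be continuous with ω(0)=0, and for x ≥ 0 let c_x denote the greatest convex minorant of ω on [0,x] and V_x(ω) = {t ∈ [0,x] : c_x(t) = ω(t)} its contact set. If 0 ≤ y < x and t ∈ V_x(ω) ∩ [0,y], then V_y(ω) ∩ [0,t] = V_x(ω) ∩ [0,t]. -/
/-!
For `t ≤ y ≤ x` the minorant `c_x` restricted to `[0,y]` is a convex minorant there, so
`c_x ≤ c_y` on `[0,y]`; in particular a contact point `t` of `c_x` is one of `c_y`. At a contact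
point `t` of `c_x`, gluing `c_t` on `[0,t]` to `c_x` on `[t,x]` is again convex (since
`c_t ≥ c_x` on `[0,t]` with equality at `t`, the slopes still increase across `t`) and lies
below `ω`, so `c_x = c_t` on `[0,t]`. Thus both `V_x ∩ [0,t]` and `V_y ∩ [0,t]` equal
`V_t ∩ [0,t]`.
-/

open Set

/-- The greatest convex minorant of `f` on `[0,x]`, evaluated at `t`: the pointwise
supremum over all convex functions on `[0,x]` lying below `f` there. -/
noncomputable def cvxMinorant (f : ℝ → ℝ) (x t : ℝ) : ℝ :=
  sSup {v : ℝ | ∃ g : ℝ → ℝ, ConvexOn ℝ (Icc 0 x) g ∧ (∀ s ∈ Icc 0 x, g s ≤ f s) ∧ g t = v}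

/-- The contact set `V_x(f)` of the greatest convex minorant of `f` on `[0,x]`. -/
def contactSet (f : ℝ → ℝ) (x : ℝ) : Set ℝ :=
  {t ∈ Icc 0 x | cvxMinorant f x t = f t}

lemma div_le_add_div_add {p q r s : ℝ} (hq : 0 < q) (hs : 0 < s) (h : p / q ≤ r / s) :
    p / q ≤ (p + r) / (q + s) := by
  rw [div_le_div_iff₀ hq hs] at h
  rw [div_le_div_iff₀ hq (add_pos hq hs)]
  linarith

theorem ConvexOn.piecewise_Iic {s : Set ℝ} {f g : ℝ → ℝ} {t : ℝ}
    (hf : ConvexOn ℝ (s ∩ Iic t) f) (hg : ConvexOn ℝ s g) (hft : f t = g t)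
    (hgf : ∀ u ∈ s ∩ Iic t, g u ≤ f u) : ConvexOn ℝ s ((Iic t).piecewise f g) := by
  refine convexOn_of_slope_mono_adjacent hg.1 fun {a b u} ha hu hab hbu => ?_
  have piecewise_right {v : ℝ} (htv : t ≤ v) : (Iic t).piecewise f g v = g v := by
    rcases htv.eq_or_lt with rfl | htv
    · simp [hft]
    · simp [htv]
  rcases le_or_gt u t with hut | htu
  · have hat : a ≤ t := (hab.trans hbu).le.trans hut
    simpa [hat, hbu.le.trans hut, hut] using hf.slope_mono_adjacent ⟨ha, hat⟩ ⟨hu, hut⟩ hab hbu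
  rcases le_or_gt t a with hta | hat
  · rw [piecewise_right hta, piecewise_right (hta.trans hab.le), piecewise_right htu.le]
    exact hg.slope_mono_adjacent ha hu hab hbu
  have hts : t ∈ s := hg.1.ordConnected.out ha hu ⟨hat.le, htu.le⟩
  rw [piecewise_eq_of_mem (Iic t) f g (mem_Iic.2 hat.le), piecewise_right htu.le]
  rcases le_or_gt t b with htb | hbt
  · rw [piecewise_right htb]
    calc (g b - f a) / (b - a) ≤ (g b - g a) / (b - a) := by
          gcongr
          exact hgf a ⟨ha, hat.le⟩
      _ ≤ (g u - g b) / (u - b) := hg.slope_mono_adjacent ha hu hab hbu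
  · have hbs : b ∈ s := hg.1.ordConnected.out ha hts ⟨hab.le, hbt.le⟩
    rw [piecewise_eq_of_mem (Iic t) f g (mem_Iic.2 hbt.le)]
    calc (f b - f a) / (b - a) ≤ (f t - f b) / (t - b) :=
          hf.slope_mono_adjacent ⟨ha, hat.le⟩ ⟨hts, mem_Iic.2 le_rfl⟩ hab hbt
      -- the slope over `[b,u]` is the mediant of the slopes over `[b,t]` and `[t,u]`
      _ ≤ (f t - f b + (g u - g t)) / (t - b + (u - t)) := by
          refine div_le_add_div_add (by linarith) (by linarith) ?_
          calc (f t - f b) / (t - b) ≤ (g t - g b) / (t - b) := by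
                rw [hft]
                gcongr
                exact hgf b ⟨hbs, hbt.le⟩
            _ ≤ (g u - g t) / (u - t) := hg.slope_mono_adjacent hbs hu hbt htu
      _ = (g u - f b) / (u - b) := by rw [hft]; ring_nf

section cvxMinorant

variable {ω g : ℝ → ℝ} {x y t : ℝ}

lemma le_cvxMinorant (ht : t ∈ Icc 0 x) (hg : ConvexOn ℝ (Icc 0 x) g)
    (hgω : ∀ s ∈ Icc 0 x, g s ≤ ω s) : g t ≤ cvxMinorant ω x t :=
  le_csSup ⟨ω t, by rintro _ ⟨g', -, hg'ω, rfl⟩; exact hg'ω t ht⟩ ⟨g, hg, hgω, rfl⟩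

lemma cvxMinorant_le_of_forall {c : ℝ} (hω : BddBelow (ω '' Icc 0 x))
    (h : ∀ g, ConvexOn ℝ (Icc 0 x) g → (∀ s ∈ Icc 0 x, g s ≤ ω s) → g t ≤ c) :
    cvxMinorant ω x t ≤ c := by
  obtain ⟨m, hm⟩ := hω
  refine csSup_le ⟨m, fun _ => m, convexOn_const m (convex_Icc 0 x),
    fun s hs => hm (mem_image_of_mem ω hs), rfl⟩ ?_
  rintro _ ⟨g, hg, hgω, rfl⟩
  exact h g hg hgω

lemma cvxMinorant_le (hω : BddBelow (ω '' Icc 0 x)) (ht : t ∈ Icc 0 x) :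
    cvxMinorant ω x t ≤ ω t :=
  cvxMinorant_le_of_forall hω fun _ _ hgω => hgω t ht

lemma convexOn_cvxMinorant (hω : BddBelow (ω '' Icc 0 x)) :
    ConvexOn ℝ (Icc 0 x) (cvxMinorant ω x) := by
  refine ⟨convex_Icc 0 x, fun p hp q hq a b ha hb hab => ?_⟩
  refine cvxMinorant_le_of_forall hω fun g hg hgω => ?_
  calc g (a • p + b • q) ≤ a • g p + b • g q := hg.2 hp hq ha hb hab
    _ ≤ a • cvxMinorant ω x p + b • cvxMinorant ω x q := by
        gcongr
        · exact le_cvxMinorant hp hg hgω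
        · exact le_cvxMinorant hq hg hgω

lemma cvxMinorant_anti (hω : BddBelow (ω '' Icc 0 x)) (hyx : y ≤ x) (ht : t ∈ Icc 0 y) :
    cvxMinorant ω x t ≤ cvxMinorant ω y t := by
  have hsub : Icc 0 y ⊆ Icc 0 x := Icc_subset_Icc_right hyx
  exact le_cvxMinorant ht ((convexOn_cvxMinorant hω).subset hsub (convex_Icc 0 y))
    fun s hs => cvxMinorant_le hω (hsub hs)

lemma mem_contactSet_of_le (hω : BddBelow (ω '' Icc 0 x)) (ht : t ∈ contactSet ω x)
    (hty : t ≤ y) (hyx : y ≤ x) : t ∈ contactSet ω y := by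
  have hty' : t ∈ Icc 0 y := ⟨ht.1.1, hty⟩
  refine ⟨hty', le_antisymm ?_ ?_⟩
  · exact cvxMinorant_le (hω.mono (image_mono (Icc_subset_Icc_right hyx))) hty'
  · exact ht.2 ▸ cvxMinorant_anti hω hyx hty'

lemma eqOn_cvxMinorant_of_mem_contactSet (hω : BddBelow (ω '' Icc 0 x))
    (ht : t ∈ contactSet ω x) : EqOn (cvxMinorant ω x) (cvxMinorant ω t) (Icc 0 t) := by
  obtain ⟨⟨ht0, htx⟩, htω⟩ := ht
  have hωt : BddBelow (ω '' Icc 0 t) := hω.mono (image_mono (Icc_subset_Icc_right htx))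
  have hleft : Icc 0 x ∩ Iic t = Icc 0 t := by
    ext u
    simp only [mem_inter_iff, mem_Icc, mem_Iic]
    exact ⟨fun h => ⟨h.1.1, h.2⟩, fun h => ⟨⟨h.1, h.2.trans htx⟩, h.2⟩⟩
  have hanti : ∀ s ∈ Icc 0 t, cvxMinorant ω x s ≤ cvxMinorant ω t s :=
    fun s hs => cvxMinorant_anti hω htx hs
  have hglue : ConvexOn ℝ (Icc 0 x) ((Iic t).piecewise (cvxMinorant ω t) (cvxMinorant ω x)) := by
    refine ConvexOn.piecewise_Iic (hleft ▸ convexOn_cvxMinorant hωt)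
      (convexOn_cvxMinorant hω) ?_ (hleft ▸ hanti)
    exact le_antisymm (htω ▸ cvxMinorant_le hωt ⟨ht0, le_rfl⟩) (hanti t ⟨ht0, le_rfl⟩)
  have hglue_le : ∀ s ∈ Icc 0 x,
      (Iic t).piecewise (cvxMinorant ω t) (cvxMinorant ω x) s ≤ ω s := by
    intro s hs
    by_cases hst : s ≤ t
    · rw [piecewise_eq_of_mem (Iic t) _ _ (mem_Iic.2 hst)]
      exact cvxMinorant_le hωt ⟨hs.1, hst⟩
    · rw [piecewise_eq_of_notMem (Iic t) _ _ (notMem_Iic.2 (not_le.1 hst))]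
      exact cvxMinorant_le hω hs
  intro s hs
  refine le_antisymm (hanti s hs) ?_
  simpa only [piecewise_eq_of_mem (Iic t) _ _ (mem_Iic.2 hs.2)] using
    le_cvxMinorant ⟨hs.1, hs.2.trans htx⟩ hglue hglue_le

lemma contactSet_inter_Icc_eq (hω : BddBelow (ω '' Icc 0 x)) (ht : t ∈ contactSet ω x) :
    contactSet ω x ∩ Icc 0 t = contactSet ω t ∩ Icc 0 t := by
  ext s
  simp only [contactSet, mem_inter_iff, mem_Icc]
  constructor
  · rintro ⟨⟨-, hsω⟩, hs⟩
    exact ⟨⟨hs, eqOn_cvxMinorant_of_mem_contactSet hω ht hs ▸ hsω⟩, hs⟩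
  · rintro ⟨⟨-, hsω⟩, hs⟩
    exact ⟨⟨⟨hs.1, hs.2.trans ht.1.2⟩, eqOn_cvxMinorant_of_mem_contactSet hω ht hs ▸ hsω⟩, hs⟩

end cvxMinorant

theorem convex_minorants_intersection_general (ω : ℝ → ℝ)
    (hcont : ContinuousOn ω (Ici 0))
    (x y t : ℝ) (hyx : y < x)
    (ht : t ∈ contactSet ω x) (hty : t ≤ y) :
    contactSet ω y ∩ Icc 0 t = contactSet ω x ∩ Icc 0 t := by
  have hω : BddBelow (ω '' Icc 0 x) :=
    isCompact_Icc.bddBelow_image (hcont.mono Icc_subset_Ici_self)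
  have hωy : BddBelow (ω '' Icc 0 y) := hω.mono (image_mono (Icc_subset_Icc_right hyx.le))
  rw [contactSet_inter_Icc_eq hω ht,
    contactSet_inter_Icc_eq hωy (mem_contactSet_of_le hω ht hty hyx.le)]

/-- If `0 ≤ y < x` and `t ∈ V_x(ω) ∩ [0,y]`, then
`V_y(ω) ∩ [0,t] = V_x(ω) ∩ [0,t]`. -/
theorem convex_minorants_intersection (ω : ℝ → ℝ)
    (hcont : ContinuousOn ω (Ici 0)) (h0 : ω 0 = 0)
    (x y t : ℝ) (hy : 0 ≤ y) (hyx : y < x)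
    (ht : t ∈ contactSet ω x) (hty : t ≤ y) :
    contactSet ω y ∩ Icc 0 t = contactSet ω x ∩ Icc 0 t :=
  convex_minorants_intersection_general ω hcont x y t hyx ht hty
end

section
/- Fix λ ∈ ℝ and define the operator Ψ_λ on continuous functions f on an interval D ⊆ [0,∞) containing 0 by Ψ_λ f(t) = f(t) + λt − inf{f(s)+λs : s ∈ D, s ≤ t}. If for some λ ∈ ℝ and t ∈ D we have Ψ_λ f(t) = 0, then for all h ≥ 0 and s ≥ 0 with t+s ∈ D, Ψ_{λ−h} f(t+s) = Ψ_{−h}(S_t Ψ_λ f)(s), where S_t denotes the shift S_t g(s) = g(t+s). In particular Ψ_{λ−h} f(t) = 0 for all h ≥ 0. -/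
/-!
Put `G w = f w + λ w`. On an interval starting at `0`, `Ψ_λ f = G - m` with `m u = inf_{[0,u]} G`,
and `Ψ_λ f t = 0` says that `G` attains its minimum over `[0, t]` at `t`. This persists after
subtracting the increasing function `h w`, so all running infima up to times past `t` may be
started at `t`. After shifting time by `t`, the claim becomes `Ψ_{-h} (F - m_F) = Ψ_{-h} F` for a
continuous `F` on `[0, s]`, i.e. `inf (F - h·) = m_F s + inf (F - m_F - h·)`, which is checked on
either side of a minimiser of `F`.
-/

open Set

/-- The operator `Ψ_λ` on functions with domain `E`:
`Ψ_λ f (t) = f t + λ t − inf {f s + λ s : s ∈ E, s ≤ t}`. -/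
noncomputable def Psi (E : Set ℝ) (l : ℝ) (g : ℝ → ℝ) (u : ℝ) : ℝ :=
  g u + l * u - sInf ((fun s => g s + l * s) '' {s ∈ E | s ≤ u})

noncomputable def runningInf (F : ℝ → ℝ) (a u : ℝ) : ℝ :=
  sInf (F '' Icc a u)

noncomputable def reflection (F : ℝ → ℝ) (a u : ℝ) : ℝ :=
  F u - runningInf F a u

section RunningInf

variable {F G : ℝ → ℝ} {a b t u w : ℝ}

theorem runningInf_congr (h : EqOn F G (Icc a u)) : runningInf F a u = runningInf G a u := by
  rw [runningInf, runningInf, image_congr h]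

theorem runningInf_comp_const_add (t : ℝ) :
    runningInf (fun x => F (t + x)) a u = runningInf F (t + a) (t + u) := by
  rw [runningInf, runningInf, ← image_const_add_Icc, image_image]

theorem runningInf_add_const (hau : a ≤ u) (hF : BddBelow (F '' Icc a u)) (c : ℝ) :
    runningInf (fun x => F x + c) a u = runningInf F a u + c := by
  have h := (OrderIso.addRight c).map_csInf' ((nonempty_Icc.2 hau).image F) hF
  rw [image_image] at h
  exact h.symm

theorem runningInf_le (hF : BddBelow (F '' Icc a u)) (hw : w ∈ Icc a u) :
    runningInf F a u ≤ F w :=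
  csInf_le hF (mem_image_of_mem F hw)

theorem runningInf_le_runningInf (hF : BddBelow (F '' Icc a b)) (hau : a ≤ u) (hub : u ≤ b) :
    runningInf F a b ≤ runningInf F a u :=
  csInf_le_csInf hF ((nonempty_Icc.2 hau).image F) (image_mono (Icc_subset_Icc_right hub))

theorem IsMinOn.runningInf_eq (h : IsMinOn F (Icc a u) w) (hw : w ∈ Icc a u) :
    runningInf F a u = F w :=
  (h.isGLB hw).csInf_eq ⟨F w, mem_image_of_mem F hw⟩

theorem IsMinOn.runningInf_eq_runningInf (h : IsMinOn F (Icc a t) t) (hat : a ≤ t) (htu : t ≤ u)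
    (hF : BddBelow (F '' Icc t u)) : runningInf F a u = runningInf F t u := by
  have hmem : F t ∈ F '' Icc t u := mem_image_of_mem F ⟨le_rfl, htu⟩
  rw [runningInf, ← Icc_union_Icc_eq_Icc hat htu, image_union,
    csInf_union h.bddBelow ((nonempty_Icc.2 hat).image F) hF ⟨_, hmem⟩]
  rw [← runningInf, h.runningInf_eq ⟨hat, le_rfl⟩]
  exact min_eq_right (csInf_le hF hmem)

end RunningInf

section Reflection

variable {F G : ℝ → ℝ} {a b t u : ℝ}

theorem reflection_congr (hau : a ≤ u) (h : EqOn F G (Icc a u)) :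
    reflection F a u = reflection G a u := by
  rw [reflection, reflection, runningInf_congr h, h ⟨hau, le_rfl⟩]

theorem reflection_comp_const_add (t : ℝ) :
    reflection (fun x => F (t + x)) 0 u = reflection F t (t + u) := by
  rw [reflection, reflection, runningInf_comp_const_add, add_zero]

theorem reflection_add_const (hau : a ≤ u) (hF : BddBelow (F '' Icc a u)) (c : ℝ) :
    reflection (fun x => F x + c) a u = reflection F a u := by
  rw [reflection, reflection, runningInf_add_const hau hF]
  ring

theorem IsMinOn.reflection_eq_reflection (h : IsMinOn F (Icc a t) t) (hat : a ≤ t) (htu : t ≤ u)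
    (hF : BddBelow (F '' Icc t u)) : reflection F a u = reflection F t u := by
  rw [reflection, reflection, h.runningInf_eq_runningInf hat htu hF]

theorem isMinOn_of_reflection_eq_zero (hF : BddBelow (F '' Icc a u)) (h : reflection F a u = 0) :
    IsMinOn F (Icc a u) u := fun w hw => by
  have : F u = runningInf F a u := sub_eq_zero.1 h
  exact this ▸ runningInf_le hF hw

theorem reflection_sub_mul_reflection (hab : a ≤ b) (hF : ContinuousOn F (Icc a b)) {h : ℝ}
    (hh : 0 ≤ h) :
    reflection (fun u => reflection F a u - h * u) a b = reflection (fun u => F u - h * u) a b := by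
  obtain ⟨w, hw, hwmin⟩ := isCompact_Icc.exists_isMinOn (nonempty_Icc.2 hab) hF
  set N := runningInf F a
  have hbdd : ∀ u ∈ Icc a b, BddBelow (F '' Icc a u) := fun u hu =>
    hwmin.bddBelow.mono (image_mono (Icc_subset_Icc_right hu.2))
  have hN_le : ∀ u ∈ Icc a b, N u ≤ F u := fun u hu => runningInf_le (hbdd u hu) ⟨hu.1, le_rfl⟩
  have hN_anti : ∀ u ∈ Icc a b, N b ≤ N u := fun u hu =>
    runningInf_le_runningInf hwmin.bddBelow hu.1 hu.2
  have hNb : N b = F w := hwmin.runningInf_eq hw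
  have hrefl : ∀ u, reflection F a u = F u - N u := fun _ => rfl
  have hmul_le : ∀ u ∈ Icc a b, h * u ≤ h * b := fun u hu => mul_le_mul_of_nonneg_left hu.2 hh
  have hI : BddBelow ((fun u => F u - h * u) '' Icc a b) :=
    isCompact_Icc.bddBelow_image (hF.sub (continuousOn_const.mul continuousOn_id))
  have hJ : BddBelow ((fun u => reflection F a u - h * u) '' Icc a b) := by
    refine ⟨-(h * b), ?_⟩
    rintro _ ⟨u, hu, rfl⟩
    linarith [hN_le u hu, hmul_le u hu, hrefl u]
  have hne : (Icc a b).Nonempty := nonempty_Icc.2 hab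
  suffices runningInf (fun u => F u - h * u) a b =
      N b + runningInf (fun u => reflection F a u - h * u) a b by
    change reflection F a b - h * b - _ = F b - h * b - _
    rw [this, reflection]
    ring
  apply le_antisymm
  · rw [← sub_le_iff_le_add']
    refine le_csInf (hne.image _) ?_
    rintro _ ⟨u, hu, rfl⟩
    change _ ≤ F u - N u - h * u
    -- before the minimiser `w` compare with the value at `w`; after it the running infimum is final
    rcases le_total u w with huw | hwu
    · have : h * u ≤ h * w := mul_le_mul_of_nonneg_left huw hh
      linarith [runningInf_le hI hw, hN_le u hu]
    · have hNu : N u = N b :=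
        le_antisymm (hNb ▸ runningInf_le (hbdd u hu) ⟨hw.1, hwu⟩) (hN_anti u hu)
      linarith [runningInf_le hI hu]
  · refine le_csInf (hne.image _) ?_
    rintro _ ⟨u, hu, rfl⟩
    linarith [runningInf_le hJ hu, hN_anti u hu, hrefl u]

theorem IsMinOn.Icc_sub_mul (hF : IsMinOn F (Icc a t) t) {h : ℝ} (hh : 0 ≤ h) :
    IsMinOn (fun w => F w - h * w) (Icc a t) t :=
  hF.sub fun _ hw => mul_le_mul_of_nonneg_left hw.2 hh

theorem IsMinOn.reflection_sub_mul (hG : IsMinOn G (Icc a t) t) (hat : a ≤ t) {s : ℝ}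
    (hs : 0 ≤ s) (hGc : ContinuousOn G (Icc t (t + s))) {h : ℝ} (hh : 0 ≤ h) :
    reflection (fun w => G w - h * w) a (t + s) =
      reflection (fun u => reflection G a (t + u) - h * u) 0 s := by
  set F : ℝ → ℝ := fun u => G (t + u)
  have hFc : ContinuousOn F (Icc 0 s) := hGc.comp (continuousOn_const.add continuousOn_id)
    fun u hu => ⟨le_add_of_nonneg_right hu.1, add_le_add_right hu.2 t⟩
  calc reflection (fun w => G w - h * w) a (t + s)
      = reflection (fun w => G w - h * w) t (t + s) :=
        (hG.Icc_sub_mul hh).reflection_eq_reflection hat (le_add_of_nonneg_right hs)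
          (isCompact_Icc.bddBelow_image (hGc.sub (continuousOn_const.mul continuousOn_id)))
    _ = reflection (fun u => F u - h * u + -(h * t)) 0 s := by
        rw [← reflection_comp_const_add]
        congr 1
        funext u
        ring
    _ = reflection (fun u => reflection F 0 u - h * u) 0 s := by
        rw [reflection_add_const (F := fun u => F u - h * u) hs
          (isCompact_Icc.bddBelow_image (hFc.sub (continuousOn_const.mul continuousOn_id)))]
        exact (reflection_sub_mul_reflection hs hFc hh).symm
    _ = reflection (fun u => reflection G a (t + u) - h * u) 0 s := by
        refine reflection_congr hs fun u hu => ?_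
        rw [reflection_comp_const_add, hG.reflection_eq_reflection hat (le_add_of_nonneg_right hu.1)
          (isCompact_Icc.bddBelow_image (hGc.mono (Icc_subset_Icc_right (by linarith [hu.2]))))]

end Reflection

section Psi

variable {E : Set ℝ}

theorem sep_le_eq_Icc (hE0 : (0 : ℝ) ∈ E) (hEpos : E ⊆ Ici 0) (hE : E.OrdConnected) {u : ℝ}
    (hu : u ∈ E) : {s ∈ E | s ≤ u} = Icc 0 u :=
  Subset.antisymm (fun _ hx => ⟨hEpos hx.1, hx.2⟩) fun _ hx => ⟨hE.out hE0 hu hx, hx.2⟩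

theorem Psi_eq_reflection (hE0 : (0 : ℝ) ∈ E) (hEpos : E ⊆ Ici 0) (hE : E.OrdConnected)
    (l : ℝ) (g : ℝ → ℝ) {u : ℝ} (hu : u ∈ E) :
    Psi E l g u = reflection (fun w => g w + l * w) 0 u := by
  rw [Psi, sep_le_eq_Icc hE0 hEpos hE hu]
  rfl

theorem Set.OrdConnected.setOf_nonneg_and_add_mem (hE : E.OrdConnected) (t : ℝ) :
    {u : ℝ | 0 ≤ u ∧ t + u ∈ E}.OrdConnected :=
  ordConnected_Ici.inter (hE.preimage_mono fun _ _ h => add_le_add_right h t)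

end Psi

/-- Composition property of the operators `Ψ_λ`: if `Ψ_λ f (t) = 0` then for all
`h ≥ 0` and `s ≥ 0` with `t + s ∈ D`,
`Ψ_{λ−h} f (t+s) = Ψ_{−h} (S_t Ψ_λ f) (s)` (where `S_t` is the shift by `t`, and the
shifted function lives on the shifted domain `{u ≥ 0 : t + u ∈ D}`).
In particular `Ψ_{λ−h} f (t) = 0` for all `h ≥ 0`. -/
theorem shear_composition (D : Set ℝ) (hD0 : (0 : ℝ) ∈ D) (hDpos : D ⊆ Ici 0)
    (hDconn : D.OrdConnected) (f : ℝ → ℝ) (hf : ContinuousOn f D)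
    (lam t : ℝ) (htD : t ∈ D) (hzero : Psi D lam f t = 0) :
    (∀ h ≥ (0 : ℝ), ∀ s ≥ (0 : ℝ), t + s ∈ D →
      Psi D (lam - h) f (t + s) =
        Psi {u : ℝ | 0 ≤ u ∧ t + u ∈ D} (-h) (fun u => Psi D lam f (t + u)) s) ∧
    (∀ h ≥ (0 : ℝ), Psi D (lam - h) f t = 0) := by
  have ht0 : 0 ≤ t := hDpos htD
  have hPsi := Psi_eq_reflection hD0 hDpos hDconn
  set G : ℝ → ℝ := fun w => f w + lam * w
  have hG : ContinuousOn G D := hf.add (continuousOn_const.mul continuousOn_id)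
  have hGmin : IsMinOn G (Icc 0 t) t := isMinOn_of_reflection_eq_zero
    (isCompact_Icc.bddBelow_image (hG.mono (hDconn.out hD0 htD))) (hPsi lam f htD ▸ hzero)
  have hshear : ∀ h : ℝ, (fun w => f w + (lam - h) * w) = fun w => G w - h * w :=
    fun h => funext fun w => by ring
  refine ⟨fun h hh s hs hts => ?_, fun h hh => ?_⟩
  · have hPsi_shift := Psi_eq_reflection (E := {u : ℝ | 0 ≤ u ∧ t + u ∈ D})
      ⟨le_rfl, by rwa [add_zero]⟩ (fun _ hu => hu.1) (hDconn.setOf_nonneg_and_add_mem t)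
    rw [hPsi _ f hts, hshear, hGmin.reflection_sub_mul ht0 hs (hG.mono (hDconn.out htD hts)) hh,
      hPsi_shift _ _ ⟨hs, hts⟩]
    refine reflection_congr hs fun u hu => ?_
    rw [hPsi lam f (hDconn.out htD hts ⟨le_add_of_nonneg_right hu.1, add_le_add_right hu.2 t⟩)]
    ring
  · rw [hPsi _ f htD, hshear, reflection, (hGmin.Icc_sub_mul hh).runningInf_eq ⟨ht0, le_rfl⟩,
      sub_self]
end

section
/- Let W be a standard Brownian motion, and for λ ∈ ℝ set X^λ_s = W_s − s²/2 + λs. Define R_λ = inf{s > 1 : X^λ_s = inf_{r≤s} X^λ_r} (the right endpoint of the excursion interval of X^λ above its running infimum containing time 1). Then there exist constants c > 0 and λ₀ such that for all λ ≥ λ₀, P(|R_λ − 2λ| > 1) ≤ e^{−cλ}. -/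
open Set MeasureTheory ProbabilityTheory

/-- A standard Brownian motion on `[0,∞)` started at `0`. -/
def IsStdBrownianMotion {Ω : Type*} [MeasurableSpace Ω] (P : Measure Ω)
    (W : ℝ → Ω → ℝ) : Prop :=
  IsProbabilityMeasure P ∧
  (∀ t, Measurable (W t)) ∧
  (∀ ω, W 0 ω = 0) ∧
  (∀ ω, ContinuousOn (fun t => W t ω) (Ici 0)) ∧
  (∀ s t : ℝ, 0 ≤ s → s ≤ t →
    Measure.map (fun ω => W t ω - W s ω) P = gaussianReal 0 (Real.toNNReal (t - s))) ∧
  (∀ n : ℕ, ∀ τ : Fin (n + 1) → ℝ, (∀ i, 0 ≤ τ i) → StrictMono τ →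
    iIndepFun (m := fun _ => Real.measurableSpace)
      (fun i : Fin n => fun ω => W (τ i.succ) ω - W (τ i.castSucc) ω) P)

/-- `Z^λ(ω)`: the set of times `s ≥ 0` at which the drifted path `ω(·) + λ·`
attains its running infimum. -/
noncomputable def runInfSet (ω : ℝ → ℝ) (l : ℝ) : Set ℝ :=
  {s : ℝ | 0 ≤ s ∧ ω s + l * s = sInf ((fun r => ω r + l * r) '' Icc 0 s)}

/-!
Write `T = 2λ + 1`. If `W > -T/4` on `[0, T]` and `W_T < T/4`, the drifted path
`X_s = W_s + s (λ - s/2)` is positive on `(1, 2λ - 1)`, so `Z^λ` does not meet that interval,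
while the minimum of `X` over `[0, T]` lies in `Z^λ` and is attained after time `1` (since
`X_T = W_T - T/2 < -T/4`); hence `|R_λ - 2λ| ≤ 1`. The complementary event is controlled by the
Gaussian tail of `W_T` and by Lévy's maximal inequality
`P(min_{[0,T]} W ≤ -b) ≤ 2 P(W_T ≤ -(b - 1))`, proved on dyadic grids by splitting according to
the first passage below `-b`, independence of increments and symmetry of the Gaussian law. Both
tails are `exp (-(T/4 - 1)^2 / (2T)) = exp (-λ/16 + O(1))`.
-/

open Real
open scoped NNReal

section Probability

variable {Ω : Type*} [MeasurableSpace Ω] {P : Measure Ω}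

lemma measure_iUnion_lt_neg_le_two_mul {ι : Type*} [Countable ι] [LinearOrder ι]
    [LocallyFiniteOrderBot ι] {X : ι → Ω → ℝ} {Y : Ω → ℝ}
    (hX : ∀ i, Measurable (X i)) (hY : Measurable Y)
    (hindep : ∀ j, IndepFun (fun ω (i : Iic j) => X (i : ι) ω) (fun ω => Y ω - X j ω) P)
    (hmedian : ∀ j, 1 ≤ 2 * P {ω | Y ω - X j ω ≤ 0}) (b : ℝ) :
    P (⋃ i, {ω | X i ω < -b}) ≤ 2 * P {ω | Y ω ≤ -b} := by
  set A : ι → Set Ω := fun i => {ω | X i ω < -b}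
  set F : ι → Set Ω := fun j => {ω | Y ω - X j ω ≤ 0}
  set B : ∀ j : ι, Set (Iic j → ℝ) := fun j =>
    {v | v ⟨j, self_mem_Iic⟩ < -b ∧ ∀ (i : ι) (hi : i < j), ¬ v ⟨i, hi.le⟩ < -b}
  -- `disjointed A j` is the event that `X` first drops below `-b` at time `j`.
  have hfirst : ∀ j : ι, disjointed A j = (fun ω (i : Iic j) => X (i : ι) ω) ⁻¹' B j := by
    intro j
    ext ω
    simp [disjointed_eq_inter_compl, A, B]
  have hB : ∀ j, MeasurableSet (B j) := fun j =>
    (measurableSet_lt (measurable_pi_apply _) measurable_const).inter <|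
      measurableSet_setOfPred.mpr <| .forall fun i => .forall fun hi =>
        measurableSet_setOfPred.mp (measurableSet_lt (measurable_pi_apply _) measurable_const).compl
  have hE : ∀ j, MeasurableSet (disjointed A j) := fun j =>
    hfirst j ▸ (by fun_prop : Measurable fun ω (i : Iic j) => X (i : ι) ω) (hB j)
  have hF : ∀ j, MeasurableSet (F j) := fun j => measurableSet_le (hY.sub (hX j)) measurable_const
  have hEF : ∀ j, P (disjointed A j) ≤ 2 * P (disjointed A j ∩ F j) := by
    intro j
    have hmul : P (disjointed A j ∩ F j) = P (disjointed A j) * P (F j) := by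
      rw [hfirst j]
      exact (hindep j).measure_inter_preimage_eq_mul _ (Iic 0) (hB j) measurableSet_Iic
    calc P (disjointed A j) = P (disjointed A j) * 1 := (mul_one _).symm
      _ ≤ P (disjointed A j) * (2 * P (F j)) := by gcongr; exact hmedian j
      _ = 2 * P (disjointed A j ∩ F j) := by rw [hmul]; ring
  have hsub : (⋃ j, disjointed A j ∩ F j) ⊆ {ω | Y ω ≤ -b} := by
    simp only [iUnion_subset_iff]
    rintro j ω ⟨hωA, hωF⟩
    have : X j ω < -b := disjointed_subset A j hωA
    simp only [F, mem_ofPred_eq] at hωF ⊢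
    linarith
  calc P (⋃ i, A i) = ∑' j, P (disjointed A j) := by
        rw [← iUnion_disjointed, measure_iUnion (disjoint_disjointed A) hE]
    _ ≤ ∑' j, 2 * P (disjointed A j ∩ F j) := ENNReal.tsum_le_tsum hEF
    _ = 2 * P (⋃ j, disjointed A j ∩ F j) := by
        rw [ENNReal.tsum_mul_left, measure_iUnion
          (fun i j hij => (disjoint_disjointed A hij).mono inter_subset_left inter_subset_left)
          (fun j => (hE j).inter (hF j))]
    _ ≤ 2 * P {ω | Y ω ≤ -b} := by gcongr

lemma ProbabilityTheory.iIndepFun.indepFun_partialSums_Iic {n : ℕ} {D : Fin n → Ω → ℝ}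
    (hD : ∀ l, Measurable (D l)) (h : iIndepFun D P) (j : Fin (n + 1)) :
    IndepFun (fun ω (i : Iic j) => ∑ l : Fin n with l.castSucc < (i : Fin (n + 1)), D l ω)
      (fun ω => ∑ l : Fin n with j ≤ l.castSucc, D l ω) P := by
  classical
  set S : Finset (Fin n) := {l | l.castSucc < j}
  set T : Finset (Fin n) := {l | j ≤ l.castSucc}
  have hST : Disjoint S T := by
    simp only [S, T, Finset.disjoint_filter]
    intro l _ hl
    exact not_le.mpr hl
  let extend (v : S → ℝ) (l : Fin n) : ℝ := if hl : l ∈ S then v ⟨l, hl⟩ else 0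
  have hextend : Measurable extend := by
    refine measurable_pi_lambda _ fun l => ?_
    by_cases hl : l ∈ S <;> simp [extend, hl, measurable_pi_apply]
  have hprefix : Measurable fun (v : S → ℝ) (i : Iic j) =>
      ∑ l : Fin n with l.castSucc < (i : Fin (n + 1)), extend v l :=
    measurable_pi_lambda _ fun i =>
      Finset.measurable_sum _ fun l _ => (measurable_pi_apply l).comp hextend
  have hsuffix : Measurable fun (v : T → ℝ) => ∑ l, v l :=
    Finset.measurable_sum _ fun l _ => measurable_pi_apply l
  convert (h.indepFun_finset S T hST hD).comp hprefix hsuffix using 1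
  · ext ω i
    refine Finset.sum_congr rfl fun l hl => ?_
    have : l ∈ S := by
      simp only [Finset.mem_filter, Finset.mem_univ, true_and, S] at hl ⊢
      exact lt_of_lt_of_le hl i.2
    simp [extend, this]
  · ext ω
    exact (Finset.sum_coe_sort T fun l => D l ω).symm

lemma one_le_two_mul_measure_Iic_zero {μ : Measure ℝ} [IsProbabilityMeasure μ]
    (hμ : μ.map (fun x => -x) = μ) : 1 ≤ 2 * μ (Iic 0) := by
  have hsymm : μ (Ici 0) = μ (Iic 0) := by
    conv_lhs => rw [← hμ]
    rw [Measure.map_apply measurable_neg measurableSet_Ici]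
    congr 1
    ext x
    simp
  calc 1 = μ (Iic 0 ∪ Ici 0) := by rw [Iic_union_Ici, measure_univ]
    _ ≤ μ (Iic 0) + μ (Ici 0) := measure_union_le _ _
    _ = 2 * μ (Iic 0) := by rw [hsymm, two_mul]

lemma hasSubgaussianMGF_id_gaussianReal (v : ℝ≥0) :
    HasSubgaussianMGF id v (gaussianReal 0 v) where
  integrable_exp_mul t := integrable_exp_mul_gaussianReal t
  mgf_le t := by simp [mgf_id_gaussianReal]

lemma ProbabilityTheory.HasSubgaussianMGF.measure_ge_le_ofReal [IsFiniteMeasure P] {X : Ω → ℝ}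
    {c : ℝ≥0} (hX : HasSubgaussianMGF X c P) {b : ℝ} (hb : 0 ≤ b) :
    P {ω | b ≤ X ω} ≤ ENNReal.ofReal (exp (-b ^ 2 / (2 * c))) := by
  rw [← ofReal_measureReal]
  exact ENNReal.ofReal_le_ofReal (hX.measure_ge_le hb)

end Probability

lemma Fin.sum_castSucc_lt_sub (f : ℕ → ℝ) {n : ℕ} (k : Fin (n + 1)) :
    ∑ l : Fin n with l.castSucc < k, (f (l + 1) - f l) = f k - f 0 := by
  have hk : (k : ℕ) ≤ n := Nat.lt_succ_iff.mp k.2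
  rw [Finset.sum_filter, ← Finset.sum_range_sub]
  simp only [Fin.lt_def, Fin.val_castSucc]
  rw [Fin.sum_univ_eq_sum_range (fun l => if l < (k : ℕ) then f (l + 1) - f l else 0),
    ← Finset.sum_filter]
  congr 1
  ext l
  simp only [Finset.mem_filter, Finset.mem_range]
  omega

lemma exists_dyadic_lt_of_continuousOn {f : ℝ → ℝ} {T c s : ℝ} (hT : 0 < T)
    (hf : ContinuousOn f (Icc 0 T)) (hs : s ∈ Icc 0 T) (hfs : f s < c) :
    ∃ N k : ℕ, k ≤ 2 ^ N ∧ f (k * T / 2 ^ N) < c := by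
  obtain ⟨δ, hδ, hclose⟩ := Metric.continuousWithinAt_iff.mp (hf s hs) (c - f s) (by linarith)
  obtain ⟨N, hN⟩ := exists_pow_lt_of_lt_one (div_pos hδ hT) (by norm_num : (1 / 2 : ℝ) < 1)
  have hmesh : T / 2 ^ N < δ := by
    rw [one_div_pow, div_lt_div_iff₀ (by positivity) hT, one_mul] at hN
    rw [div_lt_iff₀ (by positivity)]
    linarith
  set k := ⌊s * 2 ^ N / T⌋₊
  have hk_le : (k : ℝ) ≤ s * 2 ^ N / T := Nat.floor_le (by have := hs.1; positivity)
  have hk_gt : s * 2 ^ N / T < k + 1 := Nat.lt_floor_add_one _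
  have hpos : (0 : ℝ) < 2 ^ N := by positivity
  refine ⟨N, k, ?_, ?_⟩
  · have : s * 2 ^ N / T ≤ 2 ^ N := by
      rw [div_le_iff₀ hT]
      nlinarith [hs.2]
    exact_mod_cast hk_le.trans this
  · have hx_le : k * T / 2 ^ N ≤ s := by
      rw [div_le_iff₀ hpos]
      rw [le_div_iff₀ hT] at hk_le
      linarith
    have hx_gt : s - T / 2 ^ N < k * T / 2 ^ N := by
      rw [div_lt_iff₀ hT] at hk_gt
      rw [sub_lt_iff_lt_add, ← add_div, lt_div_iff₀ hpos]
      linarith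
    have := hclose ⟨by positivity, hx_le.trans hs.2⟩
      (by rw [Real.dist_eq, abs_sub_lt_iff]; constructor <;> linarith)
    rw [Real.dist_eq, abs_sub_lt_iff] at this
    linarith

namespace IsStdBrownianMotion

variable {Ω : Type*} [MeasurableSpace Ω] {P : Measure Ω} {W : ℝ → Ω → ℝ}

lemma measurable (hW : IsStdBrownianMotion P W) (t : ℝ) : Measurable (W t) := hW.2.1 t

lemma eval_zero (hW : IsStdBrownianMotion P W) (ω : Ω) : W 0 ω = 0 := hW.2.2.1 ω

lemma continuousOn (hW : IsStdBrownianMotion P W) (ω : Ω) :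
    ContinuousOn (fun t => W t ω) (Ici 0) :=
  hW.2.2.2.1 ω

lemma map_sub (hW : IsStdBrownianMotion P W) {s t : ℝ} (hs : 0 ≤ s) (hst : s ≤ t) :
    P.map (fun ω => W t ω - W s ω) = gaussianReal 0 (t - s).toNNReal :=
  hW.2.2.2.2.1 s t hs hst

lemma map_eval (hW : IsStdBrownianMotion P W) {t : ℝ} (ht : 0 ≤ t) :
    P.map (W t) = gaussianReal 0 t.toNNReal := by
  simpa [hW.eval_zero] using hW.map_sub le_rfl ht

lemma one_le_two_mul_measure_sub_nonpos (hW : IsStdBrownianMotion P W) {s t : ℝ} (hs : 0 ≤ s)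
    (hst : s ≤ t) : 1 ≤ 2 * P {ω | W t ω - W s ω ≤ 0} := by
  have := hW.1
  have hlaw : P {ω | W t ω - W s ω ≤ 0} = gaussianReal 0 (t - s).toNNReal (Iic 0) := by
    rw [← hW.map_sub hs hst, Measure.map_apply (f := fun ω => W t ω - W s ω)
      ((hW.measurable t).sub (hW.measurable s)) measurableSet_Iic]
    rfl
  rw [hlaw]
  exact one_le_two_mul_measure_Iic_zero (by rw [gaussianReal_map_neg, neg_zero])

lemma hasSubgaussianMGF (hW : IsStdBrownianMotion P W) {t : ℝ} (ht : 0 ≤ t) :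
    HasSubgaussianMGF (W t) t.toNNReal P :=
  (HasSubgaussianMGF.id_map_iff (hW.measurable t).aemeasurable).mp
    (hW.map_eval ht ▸ hasSubgaussianMGF_id_gaussianReal _)

lemma measure_ge_le (hW : IsStdBrownianMotion P W) {t b : ℝ} (ht : 0 < t) (hb : 0 ≤ b) :
    P {ω | b ≤ W t ω} ≤ ENNReal.ofReal (exp (-b ^ 2 / (2 * t))) := by
  have := hW.1
  simpa [Real.coe_toNNReal _ ht.le] using (hW.hasSubgaussianMGF ht.le).measure_ge_le_ofReal hb

lemma measure_le_neg_le (hW : IsStdBrownianMotion P W) {t b : ℝ} (ht : 0 < t) (hb : 0 ≤ b) :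
    P {ω | W t ω ≤ -b} ≤ ENNReal.ofReal (exp (-b ^ 2 / (2 * t))) := by
  have := hW.1
  simpa [Real.coe_toNNReal _ ht.le, le_neg] using
    (hW.hasSubgaussianMGF ht.le).neg.measure_ge_le_ofReal hb

lemma indepFun_Iic_sub (hW : IsStdBrownianMotion P W) {τ : ℕ → ℝ} (hτ : StrictMono τ)
    (hτ0 : τ 0 = 0) (n : ℕ) (j : Fin (n + 1)) :
    IndepFun (fun ω (i : Iic j) => W (τ (i : Fin (n + 1))) ω)
      (fun ω => W (τ n) ω - W (τ j) ω) P := by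
  set D : Fin n → Ω → ℝ := fun l ω => W (τ (l + 1)) ω - W (τ l) ω
  have hτnn : ∀ k, 0 ≤ τ k := fun k => hτ0 ▸ hτ.monotone k.zero_le
  have hD : iIndepFun D P :=
    hW.2.2.2.2.2 n (fun i => τ i) (fun i => hτnn i) (hτ.comp Fin.val_strictMono)
  have hpartial :
      ∀ ω (k : Fin (n + 1)), ∑ l : Fin n with l.castSucc < k, D l ω = W (τ k) ω := by
    intro ω k
    have := Fin.sum_castSucc_lt_sub (fun m => W (τ m) ω) k
    rwa [hτ0, hW.eval_zero, sub_zero] at this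
  have hDmeas : ∀ l, Measurable (D l) := fun l => (hW.measurable _).sub (hW.measurable _)
  convert hD.indepFun_partialSums_Iic hDmeas j using 1
  · ext ω i
    exact (hpartial ω i).symm
  · ext ω
    have hsplit := Finset.sum_filter_add_sum_filter_not Finset.univ
      (fun l : Fin n => l.castSucc < j) (fun l => D l ω)
    have htotal : ∑ l, D l ω = W (τ n) ω := by
      simpa [Fin.castSucc_lt_last] using hpartial ω (Fin.last n)
    simp only [not_lt, hpartial, htotal] at hsplit
    linarith

lemma measure_exists_lt_neg_le (hW : IsStdBrownianMotion P W) {τ : ℕ → ℝ}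
    (hτ : StrictMono τ) (hτ0 : τ 0 = 0) (n : ℕ) (b : ℝ) :
    P {ω | ∃ k ≤ n, W (τ k) ω < -b} ≤ 2 * P {ω | W (τ n) ω ≤ -b} := by
  have hτnn : ∀ k, 0 ≤ τ k := fun k => hτ0 ▸ hτ.monotone k.zero_le
  have hset :
      {ω | ∃ k ≤ n, W (τ k) ω < -b} = ⋃ i : Fin (n + 1), {ω | W (τ i) ω < -b} := by
    ext ω
    simp [Fin.exists_iff]
  rw [hset]
  exact measure_iUnion_lt_neg_le_two_mul (X := fun i : Fin (n + 1) => W (τ i))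
    (fun i => hW.measurable _) (hW.measurable _) (hW.indepFun_Iic_sub hτ hτ0 n)
    (fun j => hW.one_le_two_mul_measure_sub_nonpos (hτnn j) (hτ.monotone (Nat.le_of_lt_succ j.2)))
    b

lemma measure_exists_le_neg_le (hW : IsStdBrownianMotion P W) {T : ℝ} (hT : 0 < T) (b : ℝ) :
    P {ω | ∃ s ∈ Icc 0 T, W s ω ≤ -b} ≤ 2 * P {ω | W T ω ≤ -(b - 1)} := by
  set A : ℕ → Set Ω := fun N =>
    {ω | ∃ k : ℕ, k ≤ 2 ^ N ∧ W (k * T / 2 ^ N) ω < -(b - 1)}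
  have hA_mono : Monotone A := by
    refine monotone_nat_of_le_succ fun N ω ⟨k, hk, hWk⟩ =>
      ⟨2 * k, by rw [pow_succ]; omega, ?_⟩
    have hdouble : ((2 * k : ℕ) : ℝ) * T / 2 ^ (N + 1) = k * T / 2 ^ N := by
      push_cast
      rw [pow_succ]
      field_simp
    rwa [hdouble]
  have hcover : {ω | ∃ s ∈ Icc 0 T, W s ω ≤ -b} ⊆ ⋃ N, A N := fun ω ⟨s, hs, hWs⟩ =>
    mem_iUnion.mpr (exists_dyadic_lt_of_continuousOn hT
      ((hW.continuousOn ω).mono Icc_subset_Ici_self) hs (by linarith))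
  have hA : ∀ N, P (A N) ≤ 2 * P {ω | W T ω ≤ -(b - 1)} := by
    intro N
    have hgrid : StrictMono fun k : ℕ => k * T / 2 ^ N := fun i j hij =>
      div_lt_div_of_pos_right (mul_lt_mul_of_pos_right (by exact_mod_cast hij) hT) (by positivity)
    convert hW.measure_exists_lt_neg_le hgrid (by simp) (2 ^ N) (b - 1) using 4
    push_cast
    field_simp
  calc P {ω | ∃ s ∈ Icc 0 T, W s ω ≤ -b} ≤ P (⋃ N, A N) := measure_mono hcover
    _ = ⨆ N, P (A N) := hA_mono.measure_iUnion
    _ ≤ 2 * P {ω | W T ω ≤ -(b - 1)} := iSup_le hA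

end IsStdBrownianMotion

section RunningInfimum

variable {g : ℝ → ℝ} {l : ℝ}

lemma mem_runInfSet_of_isMinOn {T s : ℝ} (hs : s ∈ Icc 0 T)
    (hmin : IsMinOn (fun r => g r + l * r) (Icc 0 T) s) : s ∈ runInfSet g l := by
  have hleast : IsLeast ((fun r => g r + l * r) '' Icc 0 s) (g s + l * s) := by
    refine ⟨mem_image_of_mem _ ⟨hs.1, le_rfl⟩, ?_⟩
    rintro _ ⟨r, hr, rfl⟩
    exact hmin ⟨hr.1, hr.2.trans hs.2⟩
  exact ⟨hs.1, hleast.csInf_eq.symm⟩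

lemma le_of_mem_runInfSet {s r : ℝ} (hg : ContinuousOn g (Icc 0 s)) (hs : s ∈ runInfSet g l)
    (hr : r ∈ Icc 0 s) : g s + l * s ≤ g r + l * r := by
  rw [hs.2]
  exact csInf_le (isCompact_Icc.image_of_continuousOn
    (hg.add (continuousOn_const.mul continuousOn_id))).bddBelow (mem_image_of_mem _ hr)

end RunningInfimum

section DriftedPath

variable {f : ℝ → ℝ} {lam : ℝ}

lemma two_mul_sub_one_le_of_mem_runInfSet (hf : ContinuousOn f (Ici 0)) (hf0 : f 0 = 0)
    (hlam : 3 / 2 ≤ lam) (hlow : ∀ s ∈ Icc 0 (2 * lam + 1), -((2 * lam + 1) / 4) < f s)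
    {s : ℝ} (hs : s ∈ runInfSet (fun u => f u - u ^ 2 / 2) lam) (hs1 : 1 < s) :
    2 * lam - 1 ≤ s := by
  by_contra! hlt
  have hcont : ContinuousOn (fun u => f u - u ^ 2 / 2) (Icc 0 s) :=
    (hf.mono Icc_subset_Ici_self).sub (continuousOn_id.pow 2 |>.div_const 2)
  have hle := le_of_mem_runInfSet hcont hs ⟨le_rfl, hs.1⟩
  have hfs := hlow s ⟨hs.1, by linarith⟩
  simp only [hf0] at hle
  nlinarith [mul_pos (sub_pos.2 hs1) (sub_pos.2 hlt)]

lemma exists_mem_runInfSet_Ioc (hf : ContinuousOn f (Ici 0)) (hlam : 3 / 2 ≤ lam)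
    (hlow : ∀ s ∈ Icc 0 (2 * lam + 1), -((2 * lam + 1) / 4) < f s)
    (hup : f (2 * lam + 1) < (2 * lam + 1) / 4) :
    ∃ s ∈ runInfSet (fun u => f u - u ^ 2 / 2) lam, 1 < s ∧ s ≤ 2 * lam + 1 := by
  have hcont : ContinuousOn (fun u => f u - u ^ 2 / 2 + lam * u) (Icc 0 (2 * lam + 1)) :=
    ((hf.mono Icc_subset_Ici_self).sub (continuousOn_id.pow 2 |>.div_const 2)).add
      (continuousOn_const.mul continuousOn_id)
  obtain ⟨m, hm, hmin⟩ := isCompact_Icc.exists_isMinOn (nonempty_Icc.2 (by linarith)) hcont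
  refine ⟨m, mem_runInfSet_of_isMinOn hm hmin, ?_, hm.2⟩
  by_contra! hm1
  have hlast : f m - m ^ 2 / 2 + lam * m ≤
      f (2 * lam + 1) - (2 * lam + 1) ^ 2 / 2 + lam * (2 * lam + 1) :=
    hmin ⟨by linarith, le_rfl⟩
  have hfm := hlow m hm
  nlinarith [hm.1]

lemma abs_sInf_runInfSet_sub_le_one (hf : ContinuousOn f (Ici 0)) (hf0 : f 0 = 0)
    (hlam : 3 / 2 ≤ lam) (hlow : ∀ s ∈ Icc 0 (2 * lam + 1), -((2 * lam + 1) / 4) < f s)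
    (hup : f (2 * lam + 1) < (2 * lam + 1) / 4) :
    |sInf {s : ℝ | 1 < s ∧ s ∈ runInfSet (fun u => f u - u ^ 2 / 2) lam} - 2 * lam| ≤ 1 := by
  set S := {s : ℝ | 1 < s ∧ s ∈ runInfSet (fun u => f u - u ^ 2 / 2) lam}
  obtain ⟨m, hm, hm1, hmT⟩ := exists_mem_runInfSet_Ioc hf hlam hlow hup
  have hle : sInf S ≤ m := csInf_le ⟨1, fun s hs => hs.1.le⟩ ⟨hm1, hm⟩
  have hge : 2 * lam - 1 ≤ sInf S := le_csInf ⟨m, hm1, hm⟩ fun s hs =>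
    two_mul_sub_one_le_of_mem_runInfSet hf hf0 hlam hlow hs.2 hs.1
  rw [abs_le]
  constructor <;> linarith

end DriftedPath

namespace IsStdBrownianMotion

variable {Ω : Type*} [MeasurableSpace Ω] {P : Measure Ω} {W : ℝ → Ω → ℝ}

lemma setOf_one_lt_abs_sInf_runInfSet_sub_subset (hW : IsStdBrownianMotion P W) {lam : ℝ}
    (hlam : 3 / 2 ≤ lam) :
    {ω | 1 < |sInf {s : ℝ | 1 < s ∧
        s ∈ runInfSet (fun u => W u ω - u ^ 2 / 2) lam} - 2 * lam|} ⊆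
      {ω | ∃ s ∈ Icc 0 (2 * lam + 1), W s ω ≤ -((2 * lam + 1) / 4)} ∪
        {ω | (2 * lam + 1) / 4 ≤ W (2 * lam + 1) ω} := by
  intro ω hω
  by_contra! hgood
  simp only [mem_union, mem_ofPred_eq, not_or, not_exists, not_and, not_le] at hgood
  exact hω.not_ge (abs_sInf_runInfSet_sub_le_one (hW.continuousOn ω) (hW.eval_zero ω) hlam
    hgood.1 hgood.2)

end IsStdBrownianMotion

lemma three_mul_exp_le {lam : ℝ} (hlam : 100 ≤ lam) :
    3 * exp (-((2 * lam + 1) / 4 - 1) ^ 2 / (2 * (2 * lam + 1))) ≤ exp (-(1 / 32) * lam) := by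
  have h3 : (3 : ℝ) ≤ exp 2 := by linarith [add_one_le_exp 2]
  have hexponent : 1 / 32 * lam + 2 ≤ ((2 * lam + 1) / 4 - 1) ^ 2 / (2 * (2 * lam + 1)) := by
    rw [le_div_iff₀ (by linarith)]
    nlinarith
  calc 3 * exp (-((2 * lam + 1) / 4 - 1) ^ 2 / (2 * (2 * lam + 1)))
      ≤ exp 2 * exp (-((2 * lam + 1) / 4 - 1) ^ 2 / (2 * (2 * lam + 1))) := by gcongr
    _ = exp (2 - ((2 * lam + 1) / 4 - 1) ^ 2 / (2 * (2 * lam + 1))) := by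
        rw [← exp_add]
        ring_nf
    _ ≤ exp (-(1 / 32) * lam) := exp_le_exp.2 (by linarith)

/-- With `X^λ_s = W_s − s²/2 + λs` and
`R_λ = inf {s > 1 : X^λ_s = inf_{r ≤ s} X^λ_r}` (the right endpoint of the
excursion interval of `X^λ` above its running infimum containing the time `1`),
there exist `c > 0` and `λ₀` such that for all `λ ≥ λ₀`,
`P(|R_λ − 2λ| > 1) ≤ e^{−cλ}`. -/
theorem right_endpoint_concentration {Ω : Type*} [MeasurableSpace Ω] (P : Measure Ω)
    (W : ℝ → Ω → ℝ) (hW : IsStdBrownianMotion P W) :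
    ∃ c > (0 : ℝ), ∃ lam0 : ℝ, ∀ lam : ℝ, lam0 ≤ lam →
      P {ω | 1 < |sInf {s : ℝ | 1 < s ∧
          s ∈ runInfSet (fun u => W u ω - u ^ 2 / 2) lam} - 2 * lam|} ≤
        ENNReal.ofReal (Real.exp (-c * lam)) := by
  refine ⟨1 / 32, by norm_num, 100, fun lam hlam => ?_⟩
  set T := 2 * lam + 1
  have hT : 0 < T := by linarith
  set x := exp (-(T / 4 - 1) ^ 2 / (2 * T))
  calc _ ≤ P ({ω | ∃ s ∈ Icc 0 T, W s ω ≤ -(T / 4)} ∪ {ω | T / 4 ≤ W T ω}) :=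
        measure_mono (hW.setOf_one_lt_abs_sInf_runInfSet_sub_subset (by linarith))
    _ ≤ 2 * P {ω | W T ω ≤ -(T / 4 - 1)} + P {ω | T / 4 - 1 ≤ W T ω} :=
        (measure_union_le _ _).trans (add_le_add (hW.measure_exists_le_neg_le hT _)
          (measure_mono fun ω (hω : T / 4 ≤ W T ω) => show T / 4 - 1 ≤ W T ω by linarith))
    _ ≤ 2 * ENNReal.ofReal x + ENNReal.ofReal x := by
        gcongr
        · exact hW.measure_le_neg_le hT (by linarith)
        · exact hW.measure_ge_le hT (by linarith)
    _ = ENNReal.ofReal (3 * x) := by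
        rw [ENNReal.ofReal_mul (by norm_num), ENNReal.ofReal_ofNat]
        ring
    _ ≤ ENNReal.ofReal (exp (-(1 / 32) * lam)) := ENNReal.ofReal_le_ofReal (three_mul_exp_le hlam)
end

section
/- Let (X, d) be a set with a symmetric function d : X × X → [0,∞] vanishing on the diagonal, a base point 0 ∈ X, and Gromov product (x·y)₀ = (d(0,x)+d(0,y)−d(x,y))/2. Suppose that for all x, y, z ∈ X the four-point condition (x·y)₀ ≥ min{(x·z)₀, (z·y)₀} holds and d satisfies the triangle inequality. If the induced quotient metric space is connected, then it is 0-hyperbolic, and a complete, connected, 0-hyperbolic metric space is a real tree. -/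
/-!
Write `(x·y)_p` for the Gromov product. Hyperbolicity at one base point gives the base-free
four-point inequality, hence hyperbolicity at every base point. Relative to a pair `x, y`, a
point `z` has parameter `(y·z)_x` and height `(x·y)_z`; hyperbolicity at `x` says that two
points at different parameters are exactly `|Δ parameter| + heights` apart, and two points at
the same parameter at most `heights` apart. So if the heights on a level set of the parameter
were bounded below, that level set would be clopen; by connectedness there are points of
arbitrarily small height at each parameter, they form a Cauchy sequence, and completeness
puts a point of height `0` there. These points form the geodesic from `x` to `y`.

A point `b` with `d(u,b) + d(b,v) = d(u,v)` separates `u` from `v`: `{z | (u·z)_b > 0}` and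
`{z ≠ b | (u·z)_b = 0}` are disjoint open sets. Hence an arc `γ` from `x` to `y` contains the
segment, and conversely the median `b` of `x`, `y`, `γ c` lies on both `γ [0,c]` and `γ [c,1]`,
so `b = γ c` by injectivity and `γ c` lies on the segment.
-/

open Set
open scoped ENNReal

/-- A real tree: a geodesic metric space in which any two injective paths between the
same endpoints have the same range (unique arcs). -/
def IsRealTree (T : Type*) [MetricSpace T] : Prop :=
  (∀ x y : T, ∃ f : ℝ → T, f 0 = x ∧ f (dist x y) = y ∧
    ∀ s ∈ Icc (0 : ℝ) (dist x y), ∀ u ∈ Icc (0 : ℝ) (dist x y),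
      dist (f s) (f u) = |s - u|) ∧
  (∀ x y : T, ∀ γ₁ γ₂ : Path x y, Function.Injective γ₁ → Function.Injective γ₂ →
    Set.range γ₁ = Set.range γ₂)

section ZeroHyperbolic

open Filter Topology

variable {T : Type*}

lemma min_add_le_add_of_min_le {xy zw xz yw xw yz : ℝ} (hz : min xz yz ≤ xy)
    (hw : min xw yw ≤ xy) (hx : min xz xw ≤ zw) (hy : min yz yw ≤ zw) :
    min (xz + yw) (xw + yz) ≤ xy + zw := by
  rcases min_le_iff.1 hz with hz | hz <;> rcases min_le_iff.1 hw with hw | hw <;>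
    rcases min_le_iff.1 hx with hx | hx <;> rcases min_le_iff.1 hy with hy | hy <;>
    rcases le_total xy zw with h | h <;>
    first
      | exact min_le_of_left_le (by linarith)
      | exact min_le_of_right_le (by linarith)

section PseudoMetric

variable [PseudoMetricSpace T]

noncomputable def gromovProduct (p x y : T) : ℝ := (dist p x + dist p y - dist x y) / 2

lemma gromovProduct_comm (p x y : T) : gromovProduct p x y = gromovProduct p y x := by
  simp only [gromovProduct, dist_comm x y, add_comm (dist p x)]

lemma gromovProduct_nonneg (p x y : T) : 0 ≤ gromovProduct p x y := by
  have := dist_triangle_left x y p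
  unfold gromovProduct; linarith

lemma gromovProduct_self_left (p x : T) : gromovProduct p p x = 0 := by
  simp [gromovProduct]

lemma gromovProduct_self (p x : T) : gromovProduct p x x = dist p x := by
  simp [gromovProduct]

lemma gromovProduct_le_dist (p x y : T) : gromovProduct p x y ≤ dist p x := by
  have := dist_triangle p x y
  unfold gromovProduct; linarith

lemma gromovProduct_add_gromovProduct (x y z : T) :
    gromovProduct x y z + gromovProduct z x y = dist x z := by
  simp only [gromovProduct, dist_comm z x, dist_comm z y]; ring

@[fun_prop]
lemma Continuous.gromovProduct {α : Type*} [TopologicalSpace α] {f g h : α → T}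
    (hf : Continuous f) (hg : Continuous g) (hh : Continuous h) :
    Continuous fun a => gromovProduct (f a) (g a) (h a) := by
  unfold _root_.gromovProduct; fun_prop

lemma ENNReal.ofReal_gromovProduct (p x y : T) :
    ENNReal.ofReal (gromovProduct p x y) = (edist p x + edist p y - edist x y) / 2 := by
  rw [gromovProduct, ENNReal.ofReal_div_of_pos two_pos, ENNReal.ofReal_sub _ dist_nonneg,
    ENNReal.ofReal_add dist_nonneg dist_nonneg]
  simp [edist_dist]

def IsZeroHyperbolicAt (p : T) : Prop :=
  ∀ x y z : T, min (gromovProduct p x z) (gromovProduct p z y) ≤ gromovProduct p x y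

variable {p x : T}

lemma IsZeroHyperbolicAt.dist_add_dist_le_max (h : IsZeroHyperbolicAt p) (x y z w : T) :
    dist x y + dist z w ≤ max (dist x z + dist y w) (dist x w + dist y z) := by
  have key := min_add_le_add_of_min_le (by simpa only [gromovProduct_comm p z y] using h x y z)
    (by simpa only [gromovProduct_comm p w y] using h x y w)
    (by simpa only [gromovProduct_comm p z x] using h z w x)
    (by simpa only [gromovProduct_comm p z y] using h z w y)
  simp only [gromovProduct] at key
  rcases min_le_iff.1 key with key | key
  · exact le_max_of_le_left (by linarith)
  · exact le_max_of_le_right (by linarith)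

lemma isZeroHyperbolicAt_of_dist_add_dist_le_max
    (h : ∀ x y z w : T, dist x y + dist z w ≤ max (dist x z + dist y w) (dist x w + dist y z))
    (p : T) : IsZeroHyperbolicAt p := by
  intro x y z
  have := dist_comm p x; have := dist_comm p y; have := dist_comm p z
  have := dist_comm x y; have := dist_comm x z; have := dist_comm y z
  rcases le_max_iff.1 (h x y z p) with h' | h'
  · exact min_le_of_left_le (by simp only [gromovProduct]; linarith)
  · exact min_le_of_right_le (by simp only [gromovProduct]; linarith)

lemma IsZeroHyperbolicAt.rebase (h : IsZeroHyperbolicAt p) (q : T) : IsZeroHyperbolicAt q :=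
  isZeroHyperbolicAt_of_dist_add_dist_le_max h.dist_add_dist_le_max q

lemma IsZeroHyperbolicAt.dist_le (h : IsZeroHyperbolicAt x) (y z w : T) :
    dist z w ≤ |gromovProduct x y z - gromovProduct x y w| +
      gromovProduct z x y + gromovProduct w x y := by
  have hmin := h z w y
  have := le_abs_self (gromovProduct x y z - gromovProduct x y w)
  have := neg_abs_le (gromovProduct x y z - gromovProduct x y w)
  have := dist_comm z x; have := dist_comm w x; have := dist_comm y z; have := dist_comm y w
  simp only [gromovProduct] at *
  rcases min_le_iff.1 hmin with hm | hm <;> linarith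

lemma IsZeroHyperbolicAt.dist_eq_of_ne (h : IsZeroHyperbolicAt x) {y z w : T}
    (hne : gromovProduct x y z ≠ gromovProduct x y w) :
    dist z w = |gromovProduct x y z - gromovProduct x y w| +
      gromovProduct z x y + gromovProduct w x y := by
  refine le_antisymm (h.dist_le y z w) ?_
  have hzw := h y z w
  have hwz := h y w z
  have := dist_comm z x; have := dist_comm w x; have := dist_comm y z; have := dist_comm y w
  have := dist_comm w z
  rcases lt_or_gt_of_ne hne with hlt | hlt
  · rw [abs_of_neg (sub_neg.2 hlt)]
    simp only [gromovProduct] at *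
    rcases min_le_iff.1 hzw with hm | hm <;> linarith
  · rw [abs_of_pos (sub_pos.2 hlt)]
    simp only [gromovProduct] at *
    rcases min_le_iff.1 hwz with hm | hm <;> linarith

lemma IsZeroHyperbolicAt.exists_gromovProduct_eq_and_lt [PreconnectedSpace T]
    (h : IsZeroHyperbolicAt x) {y : T} {t : ℝ} (ht : t ∈ Icc 0 (dist x y)) {ε : ℝ}
    (hε : 0 < ε) : ∃ z, gromovProduct x y z = t ∧ gromovProduct z x y < ε := by
  by_contra! hfar
  let S := {z | gromovProduct x y z = t}
  have hS : S.Nonempty := intermediate_value_univ x y (by fun_prop)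
    (by rwa [gromovProduct_comm, gromovProduct_self_left, gromovProduct_self])
  have hopen : IsOpen S := by
    refine Metric.isOpen_iff.2 fun w (hw : _ = t) => ⟨ε, hε, fun z hz => ?_⟩
    by_contra hzw
    have := (h.dist_eq_of_ne (y := y) (z := w) (w := z) (hw.trans_ne (Ne.symm hzw))).ge
    have := hfar w hw
    have := abs_nonneg (gromovProduct x y w - gromovProduct x y z)
    have := gromovProduct_nonneg z x y
    rw [Metric.mem_ball, dist_comm] at hz
    linarith
  have hclosed : IsClosed S := isClosed_eq (by fun_prop) continuous_const
  have hx : x ∈ S := IsClopen.eq_univ ⟨hclosed, hopen⟩ hS ▸ mem_univ x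
  have := hfar x hx
  rw [gromovProduct_self_left] at this
  linarith

lemma IsZeroHyperbolicAt.exists_gromovProduct_eq_and_eq_zero [PreconnectedSpace T]
    [CompleteSpace T] (h : IsZeroHyperbolicAt x) {y : T} {t : ℝ} (ht : t ∈ Icc 0 (dist x y)) :
    ∃ z, gromovProduct x y z = t ∧ gromovProduct z x y = 0 := by
  choose z hzt hz using fun n : ℕ =>
    h.exists_gromovProduct_eq_and_lt ht (Nat.one_div_pos_of_nat (n := n))
  have hcauchy : CauchySeq z := by
    refine cauchySeq_of_le_tendsto_0' (fun n : ℕ => 2 * (1 / ((n : ℝ) + 1))) (fun n m hnm => ?_)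
      (by simpa only [mul_zero] using
        (tendsto_one_div_add_atTop_nhds_zero_nat (𝕜 := ℝ)).const_mul 2)
    have := h.dist_le y (z n) (z m)
    rw [hzt, hzt, sub_self, abs_zero] at this
    have := (hz m).trans_le (Nat.one_div_le_one_div (α := ℝ) hnm)
    linarith [hz n]
  obtain ⟨z₀, hlim⟩ := cauchySeq_tendsto_of_complete hcauchy
  have hparam : Tendsto (fun n => gromovProduct x y (z n)) atTop (𝓝 (gromovProduct x y z₀)) :=
    ((by fun_prop : Continuous (gromovProduct x y)).tendsto z₀).comp hlim
  have hheight : Tendsto (fun n => gromovProduct (z n) x y) atTop (𝓝 (gromovProduct z₀ x y)) :=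
    ((by fun_prop : Continuous fun z => gromovProduct z x y).tendsto z₀).comp hlim
  refine ⟨z₀, tendsto_nhds_unique hparam ?_, le_antisymm ?_ (gromovProduct_nonneg _ _ _)⟩
  · simpa only [hzt] using tendsto_const_nhds
  · exact le_of_tendsto_of_tendsto' hheight tendsto_one_div_add_atTop_nhds_zero_nat
      fun n => (hz n).le

lemma IsZeroHyperbolicAt.exists_median [PreconnectedSpace T] [CompleteSpace T]
    (h : IsZeroHyperbolicAt x) (y w : T) :
    ∃ b, dist x b + dist b y = dist x y ∧ dist x b + dist b w = dist x w ∧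
      dist w b + dist b y = dist w y := by
  obtain ⟨b, hparam, hheight⟩ := h.exists_gromovProduct_eq_and_eq_zero
    ⟨gromovProduct_nonneg x y w, gromovProduct_le_dist x y w⟩
  have hle := h.dist_le y b w
  rw [hparam, sub_self, abs_zero, hheight] at hle
  have := dist_triangle x b w
  have := dist_comm b x; have := dist_comm b y; have := dist_comm w x; have := dist_comm w y
  have := dist_comm w b
  refine ⟨b, ?_, ?_, ?_⟩ <;> simp only [gromovProduct] at * <;> linarith

end PseudoMetric

section Metric

variable [MetricSpace T] {p x : T}

lemma IsZeroHyperbolicAt.exists_geodesic [PreconnectedSpace T] [CompleteSpace T]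
    (h : IsZeroHyperbolicAt x) (y : T) :
    ∃ f : ℝ → T, f 0 = x ∧ f (dist x y) = y ∧
      ∀ s ∈ Icc (0 : ℝ) (dist x y), ∀ u ∈ Icc (0 : ℝ) (dist x y),
        dist (f s) (f u) = |s - u| := by
  choose g hparam hheight using fun t : Icc 0 (dist x y) =>
    h.exists_gromovProduct_eq_and_eq_zero t.2
  have hdist : ∀ t, dist (g t) x = t := fun t => by
    rw [dist_comm, ← gromovProduct_add_gromovProduct x y, hparam, hheight, add_zero]
  refine ⟨IccExtend dist_nonneg g, ?_, ?_, fun s hs u hu => ?_⟩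
  · rw [IccExtend_left]
    exact dist_eq_zero.1 (hdist _)
  · rw [IccExtend_right]
    have hD := hdist ⟨dist x y, right_mem_Icc.2 dist_nonneg⟩
    have hy := hheight ⟨dist x y, right_mem_Icc.2 dist_nonneg⟩
    rw [gromovProduct, hD] at hy
    exact dist_eq_zero.1 (by linarith)
  · rw [IccExtend_of_mem _ _ hs, IccExtend_of_mem _ _ hu]
    refine le_antisymm ?_ ?_
    · simpa only [hparam, hheight, add_zero] using h.dist_le y (g ⟨s, hs⟩) (g ⟨u, hu⟩)
    · simpa only [hdist] using abs_dist_sub_le (g ⟨s, hs⟩) (g ⟨u, hu⟩) x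

lemma IsZeroHyperbolicAt.mem_of_dist_add_dist_eq {b u v : T} (h : IsZeroHyperbolicAt b)
    {K : Set T} (hK : IsPreconnected K) (hu : u ∈ K) (hv : v ∈ K)
    (huv : dist u b + dist b v = dist u v) : b ∈ K := by
  by_contra hbK
  have hA : IsOpen {z | gromovProduct b u z ≤ 0 ∧ z ≠ b} := by
    refine Metric.isOpen_iff.2 fun z ⟨hz, hzb⟩ => ⟨dist z b, dist_pos.2 hzb, fun w hw => ?_⟩
    rw [Metric.mem_ball] at hw
    have hwz : 0 < gromovProduct b w z := by
      have := dist_nonneg (x := b) (y := w)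
      have := dist_comm z b; have := dist_comm w z
      unfold gromovProduct; linarith
    refine ⟨?_, fun e => (dist_comm z b ▸ e ▸ hw).false⟩
    rcases min_le_iff.1 (h u z w) with h' | h'
    · exact h'.trans hz
    · linarith
  have hB : IsOpen {z | 0 < gromovProduct b u z} := isOpen_lt continuous_const (by fun_prop)
  have hvA : gromovProduct b u v ≤ 0 := by
    have := dist_comm u b
    unfold gromovProduct; linarith
  have huB : 0 < gromovProduct b u u := by
    rw [gromovProduct_self]; exact dist_pos.2 fun e => hbK (e ▸ hu)
  obtain ⟨z, -, ⟨hzA, -⟩, hzB⟩ := hK _ _ hA hB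
    (fun z hz => (le_or_gt _ 0).imp (fun h' => ⟨h', fun e => hbK (e ▸ hz)⟩) id)
    ⟨v, hv, hvA, fun e => hbK (e ▸ hv)⟩ ⟨u, hu, huB⟩
  exact (not_lt.2 hzA) hzB

lemma IsZeroHyperbolicAt.range_path_eq [PreconnectedSpace T] [CompleteSpace T]
    (hp : IsZeroHyperbolicAt p) {x y : T} (γ : Path x y) (hγ : Function.Injective γ) :
    range γ = {z | dist x z + dist z y = dist x y} := by
  have h := hp.rebase
  refine Subset.antisymm ?_ fun b hb => (h b).mem_of_dist_add_dist_eq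
    (isPreconnected_range γ.continuous) ⟨0, γ.source⟩ ⟨1, γ.target⟩ hb
  rintro _ ⟨c, rfl⟩
  obtain ⟨b, hxy, hxc, hcy⟩ := (h x).exists_median y (γ c)
  have hpiece (a a' : unitInterval) : IsPreconnected (γ '' Icc a a') :=
    isPreconnected_Icc.image _ γ.continuous.continuousOn
  obtain ⟨s, hs, rfl⟩ : b ∈ γ '' Icc 0 c := (h b).mem_of_dist_add_dist_eq (hpiece 0 c)
    ⟨0, ⟨le_rfl, unitInterval.nonneg'⟩, γ.source⟩
    ⟨c, ⟨unitInterval.nonneg', le_rfl⟩, rfl⟩ hxc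
  obtain ⟨s', hs', hs's⟩ : γ s ∈ γ '' Icc c 1 := (h _).mem_of_dist_add_dist_eq (hpiece c 1)
    ⟨c, ⟨le_rfl, unitInterval.le_one'⟩, rfl⟩
    ⟨1, ⟨unitInterval.le_one', le_rfl⟩, γ.target⟩ hcy
  obtain rfl : s = c := le_antisymm hs.2 (hγ hs's ▸ hs'.1)
  exact hxy

lemma IsZeroHyperbolicAt.isRealTree [PreconnectedSpace T] [CompleteSpace T]
    (h : IsZeroHyperbolicAt p) : IsRealTree T :=
  ⟨fun x y => (h.rebase x).exists_geodesic y, fun _ _ γ₁ γ₂ h₁ h₂ => by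
    rw [h.range_path_eq γ₁ h₁, h.range_path_eq γ₂ h₂]⟩

end Metric

end ZeroHyperbolic

theorem four_point_real_tree_general {X : Type*} (d : X → X → ℝ≥0∞) (o : X)
    (hfour : ∀ x y z,
      min ((d o x + d o z - d x z) / 2) ((d o z + d o y - d z y) / 2) ≤
        (d o x + d o y - d x y) / 2)
    (T : Type*) [MetricSpace T] (π : X → T) (hsurj : Function.Surjective π)
    (hiso : ∀ x y, edist (π x) (π y) = d x y)
    (hconn : ConnectedSpace T) (hcomp : CompleteSpace T) :
    (∀ a b c : T,
      min ((dist (π o) a + dist (π o) c - dist a c) / 2)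
          ((dist (π o) c + dist (π o) b - dist c b) / 2) ≤
        (dist (π o) a + dist (π o) b - dist a b) / 2) ∧
    IsRealTree T := by
  have hyp : IsZeroHyperbolicAt (π o) := by
    intro a b c
    obtain ⟨x, rfl⟩ := hsurj a
    obtain ⟨y, rfl⟩ := hsurj b
    obtain ⟨z, rfl⟩ := hsurj c
    have := hfour x y z
    simp only [← hiso, ← ENNReal.ofReal_gromovProduct, ← ENNReal.ofReal_min] at this
    exact (ENNReal.ofReal_le_ofReal_iff (gromovProduct_nonneg _ _ _)).1 this
  exact ⟨hyp, hyp.isRealTree⟩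

/-- Four-point condition and real trees. `d : X × X → [0,∞]` is symmetric, vanishes on
the diagonal, satisfies the triangle inequality and the four-point condition for the
Gromov product based at `0`. If the induced quotient metric space `T` (given by a
surjection `π : X → T` with `edist (π x) (π y) = d x y`) is connected, then it is
0-hyperbolic; and being moreover complete, connected and 0-hyperbolic, it is a real
tree. -/
theorem four_point_real_tree {X : Type*} (d : X → X → ℝ≥0∞) (o : X)
    (hsymm : ∀ x y, d x y = d y x) (hdiag : ∀ x, d x x = 0)
    (htri : ∀ x y z, d x y ≤ d x z + d z y)
    (hfour : ∀ x y z,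
      min ((d o x + d o z - d x z) / 2) ((d o z + d o y - d z y) / 2) ≤
        (d o x + d o y - d x y) / 2)
    (T : Type*) [MetricSpace T] (π : X → T) (hsurj : Function.Surjective π)
    (hiso : ∀ x y, edist (π x) (π y) = d x y)
    (hconn : ConnectedSpace T) (hcomp : CompleteSpace T) :
    (∀ a b c : T,
      min ((dist (π o) a + dist (π o) c - dist a c) / 2)
          ((dist (π o) c + dist (π o) b - dist c b) / 2) ≤
        (dist (π o) a + dist (π o) b - dist a b) / 2) ∧
    IsRealTree T :=
  four_point_real_tree_general d o hfour T π hsurj hiso hconn hcomp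
end
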